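/- Let n ≥ 1, Q = 2n+2, r > 0, and let (ξ_i)_{i∈I} be a countable family of points of ℍ^n such that every point of ℍ^n belongs to at most 48^Q of the balls B_h(ξ_i, 2r). Let φ : ℝ → ℝ be smooth with 0 ≤ φ ≤ 1, φ ≡ 1 on [−1,1], φ ≡ 0 outside (−2,2), |φ'| ≤ 2, and set φ_i(ξ) = φ(d_h(ξ,ξ_i)/r). Then for every u ∈ C_c^∞(ℝ^{2n+1}), Σ_{i∈I} ∫_{ℍ^n} |∇_H(φ_i² u)|^Q dξ ≤ 96^Q ∫_{ℍ^n} |∇_H u|^Q dξ + (384/r)^Q ∫_{ℍ^n} |u|^Q dξ. -/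

import Mathlib

open MeasureTheory Real ENNReal

noncomputable section

/-- The Heisenberg group `ℍ^n` as the underlying space `ℝ^n × ℝ^n × ℝ`. -/
abbrev Heis (n : ℕ) := (Fin n → ℝ) × (Fin n → ℝ) × ℝ

/-- Heisenberg group law: `(x,y,t)∘(x',y',t') = (x+x', y+y', t+t'+2(⟨y,x'⟩−⟨x,y'⟩))`. -/
def hMul {n : ℕ} (ξ η : Heis n) : Heis n :=
  (ξ.1 + η.1, ξ.2.1 + η.2.1,
    ξ.2.2 + η.2.2 + 2 * ((∑ i, ξ.2.1 i * η.1 i) - ∑ i, ξ.1 i * η.2.1 i))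

/-- Homogeneous norm `|ξ|_h = ((|x|²+|y|²)² + t²)^{1/4}`. -/
def hNorm {n : ℕ} (ξ : Heis n) : ℝ :=
  ((∑ i, ((ξ.1 i) ^ 2 + (ξ.2.1 i) ^ 2)) ^ 2 + (ξ.2.2) ^ 2) ^ ((1 : ℝ) / 4)

/-- Heisenberg distance `d_h(ξ,η) = |η⁻¹∘ξ|_h`, where `η⁻¹ = -η`. -/
def hDist {n : ℕ} (ξ η : Heis n) : ℝ := hNorm (hMul (-η) ξ)

/-- Heisenberg ball `B_h(ξ,r) = {η : d_h(η,ξ) < r}`. -/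
def hBall {n : ℕ} (ξ : Heis n) (r : ℝ) : Set (Heis n) := {η | hDist η ξ < r}

/-- Left-invariant vector field `X_i u = ∂u/∂x_i + 2 y_i ∂u/∂t`. -/
def Xd {n : ℕ} (u : Heis n → ℝ) (i : Fin n) (ξ : Heis n) : ℝ :=
  fderiv ℝ u ξ (Pi.single i 1, 0, 0) + 2 * ξ.2.1 i * fderiv ℝ u ξ (0, 0, 1)

/-- Left-invariant vector field `Y_i u = ∂u/∂y_i − 2 x_i ∂u/∂t`. -/
def Yd {n : ℕ} (u : Heis n → ℝ) (i : Fin n) (ξ : Heis n) : ℝ :=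
  fderiv ℝ u ξ (0, Pi.single i 1, 0) - 2 * ξ.1 i * fderiv ℝ u ξ (0, 0, 1)

/-- Norm of the sub-elliptic gradient `|∇_H u| = (Σ ((X_i u)² + (Y_i u)²))^{1/2}`. -/
def hGradNorm {n : ℕ} (u : Heis n → ℝ) (ξ : Heis n) : ℝ :=
  Real.sqrt (∑ i, ((Xd u i ξ) ^ 2 + (Yd u i ξ) ^ 2))

/-- `ζ(Q,s) = e^s − Σ_{k=0}^{Q−2} s^k/k!`. -/
def zeta (Q : ℕ) (s : ℝ) : ℝ :=
  Real.exp s - ∑ k ∈ Finset.range (Q - 1), s ^ k / (Nat.factorial k)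

/-- Surface area of the unit sphere in `ℝ^{2n}`: `ω_{2n-1} = 2π^n/(n-1)!`. -/
def omegaSphere (n : ℕ) : ℝ := 2 * Real.pi ^ n / (Nat.factorial (n - 1))

/-- `σ_Q = Γ(1/2) Γ(n+1/2) ω_{2n-1} / n!`. -/
def sigmaQ (n : ℕ) : ℝ :=
  Real.Gamma (1 / 2) * Real.Gamma (n + 1 / 2) * omegaSphere n / (Nat.factorial n)

/-- `α_Q = Q σ_Q^{1/(Q-1)}` with `Q = 2n+2`. -/
def alphaQ (n : ℕ) : ℝ := (2 * n + 2) * (sigmaQ n) ^ ((1 : ℝ) / (2 * n + 1))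


/-! ### Auxiliary CLMs and derivatives -/

section CLM
variable {n : ℕ}

def cX (n : ℕ) (i : Fin n) : Heis n →L[ℝ] ℝ :=
  (ContinuousLinearMap.proj i).comp (ContinuousLinearMap.fst ℝ (Fin n → ℝ) ((Fin n → ℝ) × ℝ))

def cY (n : ℕ) (i : Fin n) : Heis n →L[ℝ] ℝ :=
  ((ContinuousLinearMap.proj i).comp (ContinuousLinearMap.fst ℝ (Fin n → ℝ) ℝ)).comp
    (ContinuousLinearMap.snd ℝ (Fin n → ℝ) ((Fin n → ℝ) × ℝ))

def cT (n : ℕ) : Heis n →L[ℝ] ℝ :=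
  (ContinuousLinearMap.snd ℝ (Fin n → ℝ) ℝ).comp
    (ContinuousLinearMap.snd ℝ (Fin n → ℝ) ((Fin n → ℝ) × ℝ))

@[simp] lemma cX_apply (i : Fin n) (v : Heis n) : cX n i v = v.1 i := rfl
@[simp] lemma cY_apply (i : Fin n) (v : Heis n) : cY n i v = v.2.1 i := rfl
@[simp] lemma cT_apply (v : Heis n) : cT n v = v.2.2 := rfl

def rho {n : ℕ} (ξ : Heis n) : ℝ := ∑ i, ((ξ.1 i) ^ 2 + (ξ.2.1 i) ^ 2)

def Fq {n : ℕ} (ξ : Heis n) : ℝ := rho ξ ^ 2 + ξ.2.2 ^ 2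

lemma rho_nonneg (ξ : Heis n) : 0 ≤ rho ξ :=
  Finset.sum_nonneg fun i _ => by positivity

lemma Fq_nonneg (ξ : Heis n) : 0 ≤ Fq ξ := by unfold Fq; positivity

lemma hNorm_eq (ξ : Heis n) : hNorm ξ = Fq ξ ^ ((1 : ℝ) / 4) := rfl

def Lrho (ξ : Heis n) : Heis n →L[ℝ] ℝ :=
  ∑ i, ((2 * ξ.1 i) • cX n i + (2 * ξ.2.1 i) • cY n i)

lemma hasFDerivAt_rho (ξ : Heis n) : HasFDerivAt rho (Lrho ξ) ξ := by
  refine HasFDerivAt.fun_sum fun i _ => ?_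
  have h1 : HasFDerivAt (fun ξ : Heis n => ξ.1 i) (cX n i) ξ := (cX n i).hasFDerivAt
  have h2 : HasFDerivAt (fun ξ : Heis n => ξ.2.1 i) (cY n i) ξ := (cY n i).hasFDerivAt
  simpa [pow_two, two_mul, add_smul] using (h1.fun_mul h1).fun_add (h2.fun_mul h2)

def LF (ξ : Heis n) : Heis n →L[ℝ] ℝ := (2 * rho ξ) • Lrho ξ + (2 * ξ.2.2) • cT n

lemma hasFDerivAt_Fq (ξ : Heis n) : HasFDerivAt Fq (LF ξ) ξ := by
  have h1 := hasFDerivAt_rho ξ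
  have h2 : HasFDerivAt (fun ξ : Heis n => ξ.2.2) (cT n) ξ := (cT n).hasFDerivAt
  have := (h1.fun_mul h1).fun_add (h2.fun_mul h2)
  simp only [← pow_two] at this
  unfold Fq LF
  refine this.congr_fderiv ?_
  rw [two_mul, two_mul, add_smul, add_smul]

def LN (ξ : Heis n) : Heis n →L[ℝ] ℝ :=
  ((1 / 4 : ℝ) * Fq ξ ^ ((1 : ℝ) / 4 - 1)) • LF ξ

lemma hasFDerivAt_hNorm {ξ : Heis n} (h : Fq ξ ≠ 0) : HasFDerivAt hNorm (LN ξ) ξ := by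
  have := (Real.hasDerivAt_rpow_const (x := Fq ξ) (p := (1 : ℝ) / 4)
    (Or.inl h)).comp_hasFDerivAt ξ (hasFDerivAt_Fq ξ)
  exact this

lemma LN_apply (ξ v : Heis n) :
    LN ξ v = Fq ξ ^ ((1 : ℝ) / 4 - 1) *
      (rho ξ * ∑ i, (ξ.1 i * v.1 i + ξ.2.1 i * v.2.1 i) + ξ.2.2 / 2 * v.2.2) := by
  have hs : ∑ i, (2 * ξ.1 i * v.1 i + 2 * ξ.2.1 i * v.2.1 i)
      = 2 * ∑ i, (ξ.1 i * v.1 i + ξ.2.1 i * v.2.1 i) := by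
    rw [Finset.mul_sum]; exact Finset.sum_congr rfl fun i _ => by ring
  simp only [LN, LF, Lrho, ContinuousLinearMap.smul_apply, ContinuousLinearMap.add_apply,
    ContinuousLinearMap.sum_apply, cX_apply, cY_apply, cT_apply, smul_eq_mul]
  rw [hs]; ring

def mMap {n : ℕ} (ξ₀ : Heis n) : Heis n → Heis n := fun ξ => hMul (-ξ₀) ξ

def Lm {n : ℕ} (ξ₀ : Heis n) : Heis n →L[ℝ] Heis n :=
  (ContinuousLinearMap.fst ℝ (Fin n → ℝ) ((Fin n → ℝ) × ℝ)).prod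
    ((((ContinuousLinearMap.fst ℝ (Fin n → ℝ) ℝ)).comp
        (ContinuousLinearMap.snd ℝ (Fin n → ℝ) ((Fin n → ℝ) × ℝ))).prod
      (cT n + (2 : ℝ) • ((∑ i, (-ξ₀).2.1 i • cX n i) - ∑ i, (-ξ₀).1 i • cY n i)))

lemma Lm_apply {n : ℕ} (ξ₀ v : Heis n) :
    Lm ξ₀ v = (v.1, v.2.1,
      v.2.2 + 2 * ((∑ i, -ξ₀.2.1 i * v.1 i) - ∑ i, -ξ₀.1 i * v.2.1 i)) := by
  simp [Lm, ContinuousLinearMap.prod_apply, ContinuousLinearMap.sum_apply, smul_eq_mul]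

lemma hasFDerivAt_mMap {n : ℕ} (ξ₀ ξ : Heis n) : HasFDerivAt (mMap ξ₀) (Lm ξ₀) ξ := by
  have hx : HasFDerivAt (fun ξ : Heis n => (-ξ₀).1 + ξ.1)
      (ContinuousLinearMap.fst ℝ (Fin n → ℝ) ((Fin n → ℝ) × ℝ)) ξ :=
    (ContinuousLinearMap.fst ℝ (Fin n → ℝ) ((Fin n → ℝ) × ℝ)).hasFDerivAt.const_add _
  have hy : HasFDerivAt (fun ξ : Heis n => (-ξ₀).2.1 + ξ.2.1)
      ((((ContinuousLinearMap.fst ℝ (Fin n → ℝ) ℝ)).comp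
        (ContinuousLinearMap.snd ℝ (Fin n → ℝ) ((Fin n → ℝ) × ℝ)))) ξ := by
    exact HasFDerivAt.const_add _ (by exact (((ContinuousLinearMap.fst ℝ (Fin n → ℝ) ℝ)).comp
        (ContinuousLinearMap.snd ℝ (Fin n → ℝ) ((Fin n → ℝ) × ℝ))).hasFDerivAt)
  have hA : HasFDerivAt (fun ξ : Heis n => ∑ i, (-ξ₀).2.1 i * ξ.1 i)
      (∑ i, (-ξ₀).2.1 i • cX n i) ξ :=
    HasFDerivAt.fun_sum fun i _ => HasFDerivAt.const_mul (by exact (cX n i).hasFDerivAt) _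
  have hB : HasFDerivAt (fun ξ : Heis n => ∑ i, (-ξ₀).1 i * ξ.2.1 i)
      (∑ i, (-ξ₀).1 i • cY n i) ξ :=
    HasFDerivAt.fun_sum fun i _ => HasFDerivAt.const_mul (by exact (cY n i).hasFDerivAt) _
  have ht0 : HasFDerivAt (fun ξ : Heis n => (-ξ₀).2.2 + ξ.2.2) (cT n) ξ :=
    HasFDerivAt.const_add _ (by exact (cT n).hasFDerivAt)
  have ht : HasFDerivAt
      (fun ξ : Heis n => (-ξ₀).2.2 + ξ.2.2
        + 2 * ((∑ i, (-ξ₀).2.1 i * ξ.1 i) - ∑ i, (-ξ₀).1 i * ξ.2.1 i))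
      (cT n + (2 : ℝ) • ((∑ i, (-ξ₀).2.1 i • cX n i) - ∑ i, (-ξ₀).1 i • cY n i)) ξ :=
    ht0.add ((hA.sub hB).const_mul 2)
  exact hx.prodMk (hy.prodMk ht)

lemma Fq_pos {n : ℕ} {ξ₀ ξ : Heis n} (h : ξ ≠ ξ₀) : 0 < Fq (mMap ξ₀ ξ) := by
  rcases (Fq_nonneg (mMap ξ₀ ξ)).lt_or_eq with h' | h'
  · exact h'
  exfalso
  have hrho : rho (mMap ξ₀ ξ) = 0 ∧ (mMap ξ₀ ξ).2.2 = 0 := by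
    unfold Fq at h'
    constructor <;> nlinarith [sq_nonneg (rho (mMap ξ₀ ξ)), sq_nonneg (mMap ξ₀ ξ).2.2]
  have hco : ∀ i, ((mMap ξ₀ ξ).1 i) ^ 2 + ((mMap ξ₀ ξ).2.1 i) ^ 2 = 0 := by
    intro i
    have := (Finset.sum_eq_zero_iff_of_nonneg (fun i _ => by positivity)).mp hrho.1
    exact this i (Finset.mem_univ i)
  have hx : ξ.1 = ξ₀.1 := by
    funext i
    have := hco i
    have hxi : (mMap ξ₀ ξ).1 i = 0 := by nlinarith [sq_nonneg ((mMap ξ₀ ξ).1 i), sq_nonneg ((mMap ξ₀ ξ).2.1 i)]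
    have h0 : -ξ₀.1 i + ξ.1 i = 0 := hxi
    linarith
  have hy : ξ.2.1 = ξ₀.2.1 := by
    funext i
    have := hco i
    have hyi : (mMap ξ₀ ξ).2.1 i = 0 := by nlinarith [sq_nonneg ((mMap ξ₀ ξ).1 i), sq_nonneg ((mMap ξ₀ ξ).2.1 i)]
    have h0 : -ξ₀.2.1 i + ξ.2.1 i = 0 := hyi
    linarith
  have ht : ξ.2.2 = ξ₀.2.2 := by
    have h22 := hrho.2
    simp only [mMap, hMul, Prod.fst_neg, Prod.snd_neg, Pi.neg_apply, hx, hy] at h22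
    have hsum : ∑ i, -ξ₀.2.1 i * ξ₀.1 i = ∑ i, -ξ₀.1 i * ξ₀.2.1 i :=
      Finset.sum_congr rfl fun i _ => by ring
    rw [hsum] at h22
    linarith
  exact h (Prod.ext hx (Prod.ext hy ht))

def Ld {n : ℕ} (ξ₀ ξ : Heis n) : Heis n →L[ℝ] ℝ := (LN (mMap ξ₀ ξ)).comp (Lm ξ₀)

lemma hasFDerivAt_dist {n : ℕ} {ξ₀ ξ : Heis n} (h : ξ ≠ ξ₀) :
    HasFDerivAt (fun η => hDist η ξ₀) (Ld ξ₀ ξ) ξ :=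
  (hasFDerivAt_hNorm (Fq_pos h).ne').comp ξ (hasFDerivAt_mMap ξ₀ ξ)

lemma Xd_eq {n : ℕ} {v : Heis n → ℝ} {L : Heis n →L[ℝ] ℝ} {ξ : Heis n}
    (h : HasFDerivAt v L ξ) (j : Fin n) :
    Xd v j ξ = L (Pi.single j 1, 0, 0) + 2 * ξ.2.1 j * L (0, 0, 1) := by
  unfold Xd; rw [h.fderiv]

lemma Yd_eq {n : ℕ} {v : Heis n → ℝ} {L : Heis n →L[ℝ] ℝ} {ξ : Heis n}
    (h : HasFDerivAt v L ξ) (j : Fin n) :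
    Yd v j ξ = L (0, Pi.single j 1, 0) - 2 * ξ.1 j * L (0, 0, 1) := by
  unfold Yd; rw [h.fderiv]

lemma Xd_dist {n : ℕ} {ξ₀ ξ : Heis n} (h : ξ ≠ ξ₀) (j : Fin n) :
    Xd (fun η => hDist η ξ₀) j ξ =
      Fq (mMap ξ₀ ξ) ^ ((1 : ℝ) / 4 - 1) *
        (rho (mMap ξ₀ ξ) * (mMap ξ₀ ξ).1 j + (mMap ξ₀ ξ).2.2 * (mMap ξ₀ ξ).2.1 j) := by
  rw [Xd_eq (hasFDerivAt_dist h) j]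
  simp only [Ld, ContinuousLinearMap.comp_apply, Lm_apply, LN_apply, mMap, hMul,
    Prod.fst_neg, Prod.snd_neg, Pi.neg_apply, Pi.add_apply, Pi.single_apply,
    Pi.zero_apply, Prod.fst_zero, Prod.snd_zero, mul_zero, zero_mul, add_zero, mul_ite,
    mul_one, Finset.sum_ite_eq', Finset.mem_univ, if_true, Finset.sum_const_zero, sub_zero,
    zero_add, zero_sub, mul_neg]
  ring

lemma Yd_dist {n : ℕ} {ξ₀ ξ : Heis n} (h : ξ ≠ ξ₀) (j : Fin n) :
    Yd (fun η => hDist η ξ₀) j ξ =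
      Fq (mMap ξ₀ ξ) ^ ((1 : ℝ) / 4 - 1) *
        (rho (mMap ξ₀ ξ) * (mMap ξ₀ ξ).2.1 j - (mMap ξ₀ ξ).2.2 * (mMap ξ₀ ξ).1 j) := by
  rw [Yd_eq (hasFDerivAt_dist h) j]
  simp only [Ld, ContinuousLinearMap.comp_apply, Lm_apply, LN_apply, mMap, hMul,
    Prod.fst_neg, Prod.snd_neg, Pi.neg_apply, Pi.add_apply, Pi.single_apply,
    Pi.zero_apply, Prod.fst_zero, Prod.snd_zero, mul_zero, zero_mul, add_zero, mul_ite,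
    mul_one, Finset.sum_ite_eq', Finset.mem_univ, if_true, Finset.sum_const_zero, sub_zero,
    zero_add, zero_sub, mul_neg]
  ring

lemma grad_dist_le {n : ℕ} {ξ₀ ξ : Heis n} (h : ξ ≠ ξ₀) :
    hGradNorm (fun η => hDist η ξ₀) ξ ≤ 1 := by
  have hF := Fq_pos h
  set ζ := mMap ξ₀ ξ with hζ
  unfold hGradNorm
  have hsum : ∑ j, ((Xd (fun η => hDist η ξ₀) j ξ) ^ 2 + (Yd (fun η => hDist η ξ₀) j ξ) ^ 2)
      = (Fq ζ ^ ((1 : ℝ) / 4 - 1)) ^ 2 * (Fq ζ * rho ζ) := by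
    have h1 : ∀ j, (Xd (fun η => hDist η ξ₀) j ξ) ^ 2 + (Yd (fun η => hDist η ξ₀) j ξ) ^ 2
        = (Fq ζ ^ ((1 : ℝ) / 4 - 1)) ^ 2 * (Fq ζ * ((ζ.1 j) ^ 2 + (ζ.2.1 j) ^ 2)) := by
      intro j
      rw [Xd_dist h j, Yd_dist h j]
      simp only [Fq, ← hζ]
      ring
    rw [Finset.sum_congr rfl fun j _ => h1 j, ← Finset.mul_sum, ← Finset.mul_sum]
    rfl
  rw [hsum]
  have h2 : (Fq ζ ^ ((1 : ℝ) / 4 - 1)) ^ 2 * (Fq ζ * rho ζ) = Fq ζ ^ (-(1 : ℝ) / 2) * rho ζ := by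
    rw [← Real.rpow_natCast (Fq ζ ^ ((1 : ℝ) / 4 - 1)) 2, ← Real.rpow_mul hF.le]
    rw [show Fq ζ * rho ζ = Fq ζ ^ (1 : ℝ) * rho ζ by rw [Real.rpow_one]]
    rw [← mul_assoc, ← Real.rpow_add hF]
    norm_num
  rw [h2]
  have h3 : Fq ζ ^ (-(1 : ℝ) / 2) * rho ζ ≤ 1 := by
    rw [show (-(1 : ℝ) / 2) = -(1 / 2) by norm_num, Real.rpow_neg hF.le,
      ← Real.sqrt_eq_rpow]
    rw [inv_mul_le_iff₀ (Real.sqrt_pos.mpr hF), mul_one]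
    rw [show Fq ζ = rho ζ ^ 2 + ζ.2.2 ^ 2 from rfl]
    exact Real.le_sqrt_of_sq_le (le_add_of_nonneg_right (sq_nonneg _))
  calc √(Fq ζ ^ (-(1 : ℝ) / 2) * rho ζ) ≤ √1 := Real.sqrt_le_sqrt h3
  _ = 1 := Real.sqrt_one

lemma hDist_nonneg {n : ℕ} (ξ η : Heis n) : 0 ≤ hDist ξ η :=
  Real.rpow_nonneg (by positivity) _

lemma hDist_self {n : ℕ} (ξ : Heis n) : hDist ξ ξ = 0 := by
  have h : hMul (-ξ) ξ = (0 : Heis n) := by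
    unfold hMul
    refine Prod.ext ?_ (Prod.ext ?_ ?_)
    · exact neg_add_cancel _
    · exact neg_add_cancel _
    · have : ∑ i, (-ξ : Heis n).2.1 i * ξ.1 i = ∑ i, (-ξ : Heis n).1 i * ξ.2.1 i :=
        Finset.sum_congr rfl fun i _ => by
          show -ξ.2.1 i * ξ.1 i = -ξ.1 i * ξ.2.1 i; ring
      show (-ξ).2.2 + ξ.2.2 + 2 * (_ - _) = 0
      rw [this]
      show -ξ.2.2 + ξ.2.2 + 2 * (_ - _) = 0
      ring
  unfold hDist
  rw [h]
  unfold hNorm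
  norm_num

lemma l2_tri {n : ℕ} (c₁ c₂ : ℝ) (a a' b b' : Fin n → ℝ) :
    Real.sqrt (∑ j, ((c₁ * a j + c₂ * b j) ^ 2 + (c₁ * a' j + c₂ * b' j) ^ 2)) ≤
      |c₁| * Real.sqrt (∑ j, (a j ^ 2 + a' j ^ 2)) +
        |c₂| * Real.sqrt (∑ j, (b j ^ 2 + b' j ^ 2)) := by
  let v : EuclideanSpace ℝ (Fin n ⊕ Fin n) := WithLp.toLp 2 (Sum.elim a a')
  let w : EuclideanSpace ℝ (Fin n ⊕ Fin n) := WithLp.toLp 2 (Sum.elim b b')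
  have hL : Real.sqrt (∑ j, ((c₁ * a j + c₂ * b j) ^ 2 + (c₁ * a' j + c₂ * b' j) ^ 2))
      = ‖c₁ • v + c₂ • w‖ := by
    rw [EuclideanSpace.norm_eq]
    congr 1
    rw [Fintype.sum_sum_type, ← Finset.sum_add_distrib]
    refine Finset.sum_congr rfl fun j _ => ?_
    simp [v, w, Real.norm_eq_abs, sq_abs, PiLp.add_apply, PiLp.smul_apply, smul_eq_mul]
  have hv : Real.sqrt (∑ j, (a j ^ 2 + a' j ^ 2)) = ‖v‖ := by
    rw [EuclideanSpace.norm_eq]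
    congr 1
    rw [Fintype.sum_sum_type, ← Finset.sum_add_distrib]
    refine Finset.sum_congr rfl fun j _ => ?_
    simp [v, Real.norm_eq_abs, sq_abs]
  have hw : Real.sqrt (∑ j, (b j ^ 2 + b' j ^ 2)) = ‖w‖ := by
    rw [EuclideanSpace.norm_eq]
    congr 1
    rw [Fintype.sum_sum_type, ← Finset.sum_add_distrib]
    refine Finset.sum_congr rfl fun j _ => ?_
    simp [w, Real.norm_eq_abs, sq_abs]
  rw [hL, hv, hw]
  calc ‖c₁ • v + c₂ • w‖ ≤ ‖c₁ • v‖ + ‖c₂ • w‖ := norm_add_le _ _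
  _ = |c₁| * ‖v‖ + |c₂| * ‖w‖ := by rw [norm_smul, norm_smul, Real.norm_eq_abs, Real.norm_eq_abs]

lemma continuous_hDist {n : ℕ} (ξ₀ : Heis n) : Continuous fun η => hDist η ξ₀ := by
  have h1 : Continuous fun η : Heis n => Fq (mMap ξ₀ η) := by
    unfold Fq rho mMap hMul
    fun_prop
  have h2 : Continuous fun x : ℝ => x ^ ((1 : ℝ) / 4) :=
    Real.continuous_rpow_const (by norm_num)
  exact h2.comp h1

section Pointwise

variable {n : ℕ} {r : ℝ} {φ : ℝ → ℝ} {u : Heis n → ℝ}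

lemma key_formula (hr : 0 < r) (hφ : ContDiff ℝ (⊤ : ℕ∞) φ) (hu : ContDiff ℝ (⊤ : ℕ∞) u)
    {ξ₀ ξ : Heis n} (h : ξ ≠ ξ₀) (j : Fin n) :
    Xd (fun η => (φ (hDist η ξ₀ / r)) ^ 2 * u η) j ξ =
        (φ (hDist ξ ξ₀ / r)) ^ 2 * Xd u j ξ +
          (u ξ * (2 * φ (hDist ξ ξ₀ / r) * deriv φ (hDist ξ ξ₀ / r) / r)) *
            Xd (fun η => hDist η ξ₀) j ξ ∧
      Yd (fun η => (φ (hDist η ξ₀ / r)) ^ 2 * u η) j ξ =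
        (φ (hDist ξ ξ₀ / r)) ^ 2 * Yd u j ξ +
          (u ξ * (2 * φ (hDist ξ ξ₀ / r) * deriv φ (hDist ξ ξ₀ / r) / r)) *
            Yd (fun η => hDist η ξ₀) j ξ := by
  have hd : HasFDerivAt (fun η => hDist η ξ₀) (Ld ξ₀ ξ) ξ := hasFDerivAt_dist h
  have hdr : HasFDerivAt (fun η => hDist η ξ₀ / r) (r⁻¹ • Ld ξ₀ ξ) ξ := by
    simpa [div_eq_mul_inv] using hd.mul_const r⁻¹
  have hφd : HasDerivAt φ (deriv φ (hDist ξ ξ₀ / r)) (hDist ξ ξ₀ / r) :=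
    ((hφ.differentiable (by simp)) _).hasDerivAt
  have hp : HasFDerivAt (fun η => φ (hDist η ξ₀ / r))
      ((deriv φ (hDist ξ ξ₀ / r)) • (r⁻¹ • Ld ξ₀ ξ)) ξ := hφd.comp_hasFDerivAt ξ hdr
  have hu' : HasFDerivAt u (fderiv ℝ u ξ) ξ := ((hu.differentiable (by simp)) ξ).hasFDerivAt
  have hg : HasFDerivAt (fun η => (φ (hDist η ξ₀ / r)) ^ 2 * u η)
      ((φ (hDist ξ ξ₀ / r) * φ (hDist ξ ξ₀ / r)) • fderiv ℝ u ξ +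
        u ξ • (φ (hDist ξ ξ₀ / r) • ((deriv φ (hDist ξ ξ₀ / r)) • (r⁻¹ • Ld ξ₀ ξ)) +
          φ (hDist ξ ξ₀ / r) • ((deriv φ (hDist ξ ξ₀ / r)) • (r⁻¹ • Ld ξ₀ ξ)))) ξ := by
    have := (hp.fun_mul hp).fun_mul hu'
    simpa [pow_two] using this
  constructor
  · rw [Xd_eq hg j, Xd_eq hd j]
    unfold Xd
    simp only [ContinuousLinearMap.add_apply, ContinuousLinearMap.smul_apply, smul_eq_mul]
    ring
  · rw [Yd_eq hg j, Yd_eq hd j]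
    unfold Yd
    simp only [ContinuousLinearMap.add_apply, ContinuousLinearMap.smul_apply, smul_eq_mul]
    ring

lemma grad_g_le (hr : 0 < r) (hφ : ContDiff ℝ (⊤ : ℕ∞) φ) (hφ01 : ∀ s, 0 ≤ φ s ∧ φ s ≤ 1)
    (hφ1 : ∀ s ∈ Set.Icc (-1 : ℝ) 1, φ s = 1) (hφ' : ∀ s, |deriv φ s| ≤ 2)
    (hu : ContDiff ℝ (⊤ : ℕ∞) u) (ξ₀ ξ : Heis n) :
    hGradNorm (fun η => (φ (hDist η ξ₀ / r)) ^ 2 * u η) ξ ≤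
      hGradNorm u ξ + 4 / r * |u ξ| := by
  by_cases h : ξ = ξ₀
  · subst h
    have hopen : IsOpen {η : Heis n | hDist η ξ < r} :=
      isOpen_lt (continuous_hDist ξ) continuous_const
    have hmem : ξ ∈ {η : Heis n | hDist η ξ < r} := by
      simp only [Set.mem_setOf_eq, hDist_self]; exact hr
    have hev : (fun η => (φ (hDist η ξ / r)) ^ 2 * u η) =ᶠ[nhds ξ] u := by
      filter_upwards [hopen.mem_nhds hmem] with η hη
      have h1 : φ (hDist η ξ / r) = 1 := by
        refine hφ1 _ ⟨?_, ?_⟩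
        · have h0 := hDist_nonneg η ξ
          have h0' : 0 ≤ hDist η ξ / r := div_nonneg h0 hr.le
          linarith
        · exact le_of_lt ((div_lt_one hr).mpr hη)
      rw [h1]; ring
    have hfd : fderiv ℝ (fun η => (φ (hDist η ξ / r)) ^ 2 * u η) ξ = fderiv ℝ u ξ :=
      hev.fderiv_eq
    have hXY : hGradNorm (fun η => (φ (hDist η ξ / r)) ^ 2 * u η) ξ = hGradNorm u ξ := by
      unfold hGradNorm Xd Yd
      rw [hfd]
    rw [hXY]
    have : 0 ≤ 4 / r * |u ξ| := by positivity
    linarith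
  · set p := φ (hDist ξ ξ₀ / r) with hp
    set p' := deriv φ (hDist ξ ξ₀ / r) with hp'
    set c₂ := u ξ * (2 * p * p' / r) with hc₂
    have hkey := fun j => key_formula hr hφ hu h j
    have hb : hGradNorm (fun η => (φ (hDist η ξ₀ / r)) ^ 2 * u η) ξ ≤
        |p ^ 2| * hGradNorm u ξ + |c₂| * hGradNorm (fun η => hDist η ξ₀) ξ := by
      unfold hGradNorm
      have hsum : ∑ j, ((Xd (fun η => (φ (hDist η ξ₀ / r)) ^ 2 * u η) j ξ) ^ 2 +
            (Yd (fun η => (φ (hDist η ξ₀ / r)) ^ 2 * u η) j ξ) ^ 2)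
          = ∑ j, ((p ^ 2 * Xd u j ξ + c₂ * Xd (fun η => hDist η ξ₀) j ξ) ^ 2 +
            (p ^ 2 * Yd u j ξ + c₂ * Yd (fun η => hDist η ξ₀) j ξ) ^ 2) := by
        refine Finset.sum_congr rfl fun j _ => ?_
        rw [(hkey j).1, (hkey j).2]
      rw [hsum]
      exact l2_tri (p ^ 2) c₂ (fun j => Xd u j ξ) (fun j => Yd u j ξ)
        (fun j => Xd (fun η => hDist η ξ₀) j ξ) (fun j => Yd (fun η => hDist η ξ₀) j ξ)
    have h1 : |p ^ 2| ≤ 1 := by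
      rw [abs_of_nonneg (sq_nonneg p)]
      exact pow_le_one₀ (hφ01 _).1 (hφ01 _).2
    have h2 : |c₂| ≤ 4 / r * |u ξ| := by
      rw [hc₂, abs_mul]
      have : |2 * p * p' / r| ≤ 4 / r := by
        rw [abs_div, abs_of_pos hr, div_le_div_iff_of_pos_right hr]
        calc |2 * p * p'| = 2 * p * |p'| := by
              rw [abs_mul, abs_of_nonneg (by linarith [(hφ01 (hDist ξ ξ₀ / r)).1] : (0:ℝ) ≤ 2 * p)]
        _ ≤ 2 * 1 * 2 := by
              have := (hφ01 (hDist ξ ξ₀ / r)).1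
              have := (hφ01 (hDist ξ ξ₀ / r)).2
              have := hφ' (hDist ξ ξ₀ / r)
              have habs : 0 ≤ |p'| := abs_nonneg _
              nlinarith
        _ = 4 := by norm_num
      calc |u ξ| * |2 * p * p' / r| ≤ |u ξ| * (4 / r) := by
            exact mul_le_mul_of_nonneg_left this (abs_nonneg _)
      _ = 4 / r * |u ξ| := by ring
    have hGu : 0 ≤ hGradNorm u ξ := Real.sqrt_nonneg _
    have hGd0 : 0 ≤ hGradNorm (fun η => hDist η ξ₀) ξ := Real.sqrt_nonneg _
    have hGd : hGradNorm (fun η => hDist η ξ₀) ξ ≤ 1 := grad_dist_le h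
    calc hGradNorm (fun η => (φ (hDist η ξ₀ / r)) ^ 2 * u η) ξ
        ≤ |p ^ 2| * hGradNorm u ξ + |c₂| * hGradNorm (fun η => hDist η ξ₀) ξ := hb
    _ ≤ 1 * hGradNorm u ξ + (4 / r * |u ξ|) * 1 := by
        gcongr
    _ = hGradNorm u ξ + 4 / r * |u ξ| := by ring

lemma grad_g_zero (hr : 0 < r) (hφ : ContDiff ℝ (⊤ : ℕ∞) φ) (hφ01 : ∀ s, 0 ≤ φ s ∧ φ s ≤ 1)
    (hφ0 : ∀ s : ℝ, 2 ≤ |s| → φ s = 0) (hu : ContDiff ℝ (⊤ : ℕ∞) u)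
    {ξ₀ ξ : Heis n} (h2r : 2 * r ≤ hDist ξ ξ₀) :
    hGradNorm (fun η => (φ (hDist η ξ₀ / r)) ^ 2 * u η) ξ = 0 := by
  have h : ξ ≠ ξ₀ := by
    intro he
    rw [he, hDist_self] at h2r
    nlinarith
  have hs2 : (2 : ℝ) ≤ hDist ξ ξ₀ / r := (le_div_iff₀ hr).mpr (by linarith)
  have hp0 : φ (hDist ξ ξ₀ / r) = 0 := hφ0 _ (by rw [abs_of_nonneg (by linarith)]; exact hs2)
  have hp'0 : deriv φ (hDist ξ ξ₀ / r) = 0 := by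
    have hmin : IsLocalMin φ (hDist ξ ξ₀ / r) :=
      Filter.Eventually.of_forall fun s => by rw [hp0]; exact (hφ01 s).1
    exact hmin.deriv_eq_zero
  have hkey := fun j => key_formula hr hφ hu h j
  unfold hGradNorm
  have : ∀ j : Fin n, (Xd (fun η => (φ (hDist η ξ₀ / r)) ^ 2 * u η) j ξ) ^ 2 +
      (Yd (fun η => (φ (hDist η ξ₀ / r)) ^ 2 * u η) j ξ) ^ 2 = 0 := by
    intro j
    rw [(hkey j).1, (hkey j).2, hp0, hp'0]
    ring
  rw [Finset.sum_congr rfl fun j _ => this j]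
  simp

end Pointwise


lemma meas_grad_pow {n : ℕ} (v : Heis n → ℝ) (Q : ℕ) :
    Measurable fun ξ : Heis n => ENNReal.ofReal (hGradNorm v ξ ^ Q) := by
  have h : ∀ w : Heis n, Measurable fun ξ : Heis n => fderiv ℝ v ξ w := fun w =>
    measurable_fderiv_apply_const ℝ v w
  have hy : ∀ i : Fin n, Measurable fun ξ : Heis n => ξ.2.1 i := fun i =>
    (measurable_pi_apply i).comp (measurable_fst.comp measurable_snd)
  have hx : ∀ i : Fin n, Measurable fun ξ : Heis n => ξ.1 i := fun i =>
    (measurable_pi_apply i).comp measurable_fst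
  have hX : ∀ i, Measurable fun ξ => Xd v i ξ := fun i =>
    (h _).add ((((hy i).const_mul 2)).mul (h _))
  have hY : ∀ i, Measurable fun ξ => Yd v i ξ := fun i =>
    (h _).sub ((((hx i).const_mul 2)).mul (h _))
  have hsum : Measurable fun ξ : Heis n => ∑ i, ((Xd v i ξ) ^ 2 + (Yd v i ξ) ^ 2) :=
    Finset.measurable_sum _ fun i _ => (((hX i).pow_const 2).add ((hY i).pow_const 2))
  exact ENNReal.measurable_ofReal.comp
    ((Real.continuous_sqrt.measurable.comp hsum).pow_const Q)

lemma real_key (Q : ℕ) {A B r : ℝ} (hA : 0 ≤ A) (hB : 0 ≤ B) (hr : 0 < r) :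
    (48 : ℝ) ^ Q * (A + 4 / r * B) ^ Q ≤ 96 ^ Q * A ^ Q + (384 / r) ^ Q * B ^ Q := by
  set D := 4 / r * B with hD
  have hD0 : 0 ≤ D := by positivity
  have h1 : A + D ≤ 2 * max A D := by
    rw [two_mul]
    exact add_le_add (le_max_left _ _) (le_max_right _ _)
  have hmax : (max A D) ^ Q ≤ A ^ Q + D ^ Q := by
    rcases max_cases A D with ⟨hm, _⟩ | ⟨hm, _⟩ <;> rw [hm]
    · exact le_add_of_nonneg_right (by positivity)
    · exact le_add_of_nonneg_left (by positivity)
  have h2 : (A + D) ^ Q ≤ 2 ^ Q * (A ^ Q + D ^ Q) := by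
    calc (A + D) ^ Q ≤ (2 * max A D) ^ Q := pow_le_pow_left₀ (by positivity) h1 Q
    _ = 2 ^ Q * (max A D) ^ Q := mul_pow 2 _ Q
    _ ≤ 2 ^ Q * (A ^ Q + D ^ Q) := mul_le_mul_of_nonneg_left hmax (by positivity)
  have e3 : D ^ Q = (4 / r) ^ Q * B ^ Q := by rw [hD, mul_pow]
  calc (48 : ℝ) ^ Q * (A + D) ^ Q ≤ 48 ^ Q * (2 ^ Q * (A ^ Q + D ^ Q)) :=
        mul_le_mul_of_nonneg_left h2 (by positivity)
  _ = ((48 : ℝ) ^ Q * 2 ^ Q) * A ^ Q + ((48 : ℝ) ^ Q * 2 ^ Q * (4 / r) ^ Q) * B ^ Q := by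
      rw [e3]; ring
  _ = 96 ^ Q * A ^ Q + (384 / r) ^ Q * B ^ Q := by
      have ha : ((48 : ℝ) ^ Q * 2 ^ Q) = 96 ^ Q := by rw [← mul_pow]; norm_num
      have hb : ((48 : ℝ) ^ Q * 2 ^ Q * (4 / r) ^ Q) = (384 / r) ^ Q := by
        rw [← mul_pow, ← mul_pow]
        have hbase : (48 * 2 * (4 / r) : ℝ) = 384 / r := by ring
        rw [hbase]
      rw [hb, ha]

/-- Gluing estimate: if every point of `ℍ^n` lies in at most `48^Q` of the balls
`B_h(ξ_i,2r)`, then for the cut-off functions `φ_i(ξ) = φ(d_h(ξ,ξ_i)/r)`,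
`Σ_i ∫ |∇_H(φ_i² u)|^Q ≤ 96^Q ∫ |∇_H u|^Q + (384/r)^Q ∫ |u|^Q`. -/
theorem gluing_gradient_estimate (n : ℕ) (hn : 1 ≤ n) (r : ℝ) (hr : 0 < r)
    {I : Type*} [Countable I] (c : I → Heis n)
    (hmult : ∀ ξ : Heis n, {i : I | ξ ∈ hBall (c i) (2 * r)}.Finite ∧
      {i : I | ξ ∈ hBall (c i) (2 * r)}.ncard ≤ 48 ^ (2 * n + 2))
    (φ : ℝ → ℝ) (hφ : ContDiff ℝ (⊤ : ℕ∞) φ) (hφ01 : ∀ s, 0 ≤ φ s ∧ φ s ≤ 1)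
    (hφ1 : ∀ s ∈ Set.Icc (-1 : ℝ) 1, φ s = 1)
    (hφ0 : ∀ s : ℝ, 2 ≤ |s| → φ s = 0)
    (hφ' : ∀ s, |deriv φ s| ≤ 2)
    (u : Heis n → ℝ) (hu : ContDiff ℝ (⊤ : ℕ∞) u) (hcu : HasCompactSupport u) :
    ∑' i : I, ∫⁻ ξ, ENNReal.ofReal
        (hGradNorm (fun η => (φ (hDist η (c i) / r)) ^ 2 * u η) ξ ^ (2 * n + 2)) ≤
      ENNReal.ofReal ((96 : ℝ) ^ (2 * n + 2)) *
          (∫⁻ ξ, ENNReal.ofReal (hGradNorm u ξ ^ (2 * n + 2))) +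
        ENNReal.ofReal ((384 / r) ^ (2 * n + 2)) *
          (∫⁻ ξ, ENNReal.ofReal (|u ξ| ^ (2 * n + 2))) := by
  classical
  set Q := 2 * n + 2 with hQ
  set C₁ : ℝ≥0∞ := ENNReal.ofReal ((96 : ℝ) ^ Q) with hC₁
  set C₂ : ℝ≥0∞ := ENNReal.ofReal ((384 / r) ^ Q) with hC₂
  have hFmeas : ∀ i : I, Measurable fun ξ : Heis n => ENNReal.ofReal
      (hGradNorm (fun η => (φ (hDist η (c i) / r)) ^ 2 * u η) ξ ^ Q) := fun i =>
    meas_grad_pow _ Q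
  have hpoint : ∀ ξ : Heis n,
      (∑' i : I, ENNReal.ofReal
        (hGradNorm (fun η => (φ (hDist η (c i) / r)) ^ 2 * u η) ξ ^ Q)) ≤
      C₁ * ENNReal.ofReal (hGradNorm u ξ ^ Q) + C₂ * ENNReal.ofReal (|u ξ| ^ Q) := by
    intro ξ
    obtain ⟨hfin, hcard⟩ := hmult ξ
    have hA : 0 ≤ hGradNorm u ξ := Real.sqrt_nonneg _
    have hB : 0 ≤ |u ξ| := abs_nonneg _
    have h0 : ∀ i ∉ hfin.toFinset, ENNReal.ofReal
        (hGradNorm (fun η => (φ (hDist η (c i) / r)) ^ 2 * u η) ξ ^ Q) = 0 := by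
      intro i hi
      rw [Set.Finite.mem_toFinset] at hi
      have h2r : 2 * r ≤ hDist ξ (c i) := not_lt.mp hi
      rw [grad_g_zero hr hφ hφ01 hφ0 hu h2r, zero_pow (by omega : Q ≠ 0),
        ENNReal.ofReal_zero]
    have hterm : ∀ i ∈ hfin.toFinset, ENNReal.ofReal
        (hGradNorm (fun η => (φ (hDist η (c i) / r)) ^ 2 * u η) ξ ^ Q) ≤
        ENNReal.ofReal ((hGradNorm u ξ + 4 / r * |u ξ|) ^ Q) := fun i _ =>
      ENNReal.ofReal_le_ofReal
        (pow_le_pow_left₀ (Real.sqrt_nonneg _) (grad_g_le hr hφ hφ01 hφ1 hφ' hu (c i) ξ) Q)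
    have hcast : ((48 ^ Q : ℕ) : ℝ≥0∞) = ENNReal.ofReal ((48 : ℝ) ^ Q) := by
      rw [ENNReal.ofReal_pow (by norm_num : (0 : ℝ) ≤ 48)]
      norm_num
    calc (∑' i : I, ENNReal.ofReal
          (hGradNorm (fun η => (φ (hDist η (c i) / r)) ^ 2 * u η) ξ ^ Q))
        = ∑ i ∈ hfin.toFinset, ENNReal.ofReal
          (hGradNorm (fun η => (φ (hDist η (c i) / r)) ^ 2 * u η) ξ ^ Q) :=
          tsum_eq_sum h0
    _ ≤ ∑ _i ∈ hfin.toFinset, ENNReal.ofReal ((hGradNorm u ξ + 4 / r * |u ξ|) ^ Q) :=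
          Finset.sum_le_sum hterm
    _ = hfin.toFinset.card • ENNReal.ofReal ((hGradNorm u ξ + 4 / r * |u ξ|) ^ Q) :=
          Finset.sum_const _
    _ ≤ (48 ^ Q : ℕ) * ENNReal.ofReal ((hGradNorm u ξ + 4 / r * |u ξ|) ^ Q) := by
          rw [nsmul_eq_mul]
          refine mul_le_mul_left ?_ _
          have hc : hfin.toFinset.card ≤ 48 ^ Q := by
            rw [← Set.ncard_eq_toFinset_card _ hfin]; exact hcard
          exact_mod_cast hc
    _ = ENNReal.ofReal ((48 : ℝ) ^ Q * (hGradNorm u ξ + 4 / r * |u ξ|) ^ Q) := by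
          rw [hcast, ← ENNReal.ofReal_mul (by positivity)]
    _ ≤ ENNReal.ofReal ((96 : ℝ) ^ Q * hGradNorm u ξ ^ Q + (384 / r) ^ Q * |u ξ| ^ Q) :=
          ENNReal.ofReal_le_ofReal (real_key Q hA hB hr)
    _ = C₁ * ENNReal.ofReal (hGradNorm u ξ ^ Q) + C₂ * ENNReal.ofReal (|u ξ| ^ Q) := by
          rw [ENNReal.ofReal_add (by positivity) (by positivity),
            ENNReal.ofReal_mul (by positivity), ENNReal.ofReal_mul (by positivity)]
  calc (∑' i : I, ∫⁻ ξ, ENNReal.ofReal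
        (hGradNorm (fun η => (φ (hDist η (c i) / r)) ^ 2 * u η) ξ ^ Q))
      = ∫⁻ ξ, ∑' i : I, ENNReal.ofReal
        (hGradNorm (fun η => (φ (hDist η (c i) / r)) ^ 2 * u η) ξ ^ Q) :=
        (lintegral_tsum fun i => (hFmeas i).aemeasurable).symm
  _ ≤ ∫⁻ ξ, (C₁ * ENNReal.ofReal (hGradNorm u ξ ^ Q) + C₂ * ENNReal.ofReal (|u ξ| ^ Q)) :=
        lintegral_mono hpoint
  _ = C₁ * (∫⁻ ξ, ENNReal.ofReal (hGradNorm u ξ ^ Q)) +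
        C₂ * (∫⁻ ξ, ENNReal.ofReal (|u ξ| ^ Q)) := by
        rw [lintegral_add_left ((meas_grad_pow u Q).const_mul _),
          lintegral_const_mul' _ _ ENNReal.ofReal_ne_top,
          lintegral_const_mul' _ _ ENNReal.ofReal_ne_top]
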